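/- For every z = r e^{iθ} with 0 ≤ r < 1 and θ ∈ ℝ, one has |6 + 4z + 3z̄ + z²|² − |z(1+z)|² = 12(1 + r cos θ)(2(1 + r cos θ)² + 1 − r²) > 0; in particular |6 + 4z + 3z̄ + z²| > |z(1+z)| for all z with |z| < 1. -/

import Mathlib

open Real Complex

lemma key (z : ℂ) :
    (‖6 + 4 * z + 3 * (starRingEnd ℂ) z + z ^ 2‖) ^ 2
      - (‖z * (1 + z)‖) ^ 2
      = 12 * (1 + z.re) * (2 * (1 + z.re) ^ 2 + 1 - (z.re ^ 2 + z.im ^ 2)) := by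
  rw [Complex.sq_norm, Complex.sq_norm]
  simp [Complex.normSq_apply, Complex.add_re, Complex.add_im, Complex.mul_re,
    Complex.mul_im, Complex.conj_re, Complex.conj_im, pow_two]
  ring

lemma keypos (z : ℂ) (h : ‖z‖ < 1) :
    0 < 12 * (1 + z.re) * (2 * (1 + z.re) ^ 2 + 1 - (z.re ^ 2 + z.im ^ 2)) := by
  have h2 : z.re ^ 2 + z.im ^ 2 < 1 := by
    have := Complex.sq_norm z
    rw [Complex.normSq_apply] at this
    nlinarith [norm_nonneg z]
  nlinarith [sq_nonneg (1 + z.re), sq_nonneg z.im, sq_nonneg (1 - z.re)]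

theorem jacobian_numerator (r θ : ℝ) (hr0 : 0 ≤ r) (hr1 : r < 1) :
    (‖6 + 4 * ((r : ℂ) * Complex.exp (θ * Complex.I))
        + 3 * (starRingEnd ℂ) ((r : ℂ) * Complex.exp (θ * Complex.I))
        + ((r : ℂ) * Complex.exp (θ * Complex.I)) ^ 2‖) ^ 2
      - (‖((r : ℂ) * Complex.exp (θ * Complex.I))
          * (1 + (r : ℂ) * Complex.exp (θ * Complex.I))‖) ^ 2
      = 12 * (1 + r * Real.cos θ) * (2 * (1 + r * Real.cos θ) ^ 2 + 1 - r ^ 2) ∧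
    0 < 12 * (1 + r * Real.cos θ) * (2 * (1 + r * Real.cos θ) ^ 2 + 1 - r ^ 2) ∧
    ∀ z : ℂ, ‖z‖ < 1 →
      ‖z * (1 + z)‖ <
        ‖6 + 4 * z + 3 * (starRingEnd ℂ) z + z ^ 2‖ := by
  set w : ℂ := (r : ℂ) * Complex.exp (θ * Complex.I) with hw
  have hre : w.re = r * Real.cos θ := by
    simp [hw, Complex.exp_ofReal_mul_I_re, Complex.mul_re]
  have him : w.im = r * Real.sin θ := by
    simp [hw, Complex.exp_ofReal_mul_I_im, Complex.mul_im]
  have hsum : w.re ^ 2 + w.im ^ 2 = r ^ 2 := by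
    rw [hre, him]
    have := Real.sin_sq_add_cos_sq θ
    nlinarith
  have heq := key w
  rw [hsum, hre] at heq
  have hcos := Real.neg_one_le_cos θ
  have hcos' := Real.cos_le_one θ
  refine ⟨heq, ?_, ?_⟩
  · have h1 : 0 < 1 + r * Real.cos θ := by nlinarith
    have h2 : 0 < 2 * (1 + r * Real.cos θ) ^ 2 + 1 - r ^ 2 := by nlinarith [sq_nonneg (1 + r * Real.cos θ)]
    positivity
  · intro z hz
    have h1 := key z
    have h2 := keypos z hz
    have := norm_nonneg (z * (1 + z))
    nlinarith [norm_nonneg (6 + 4 * z + 3 * (starRingEnd ℂ) z + z ^ 2)]
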